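/- Let k₁ and k₂ be relatively prime positive integers. The map φ : ℝ → H³(ℝ) × SU(2) defined by φ(t) = (U(0, 0, k₂t), diag(e^{-2πik₁t}, e^{2πik₁t})) is an injective continuous group homomorphism that is a homeomorphism onto its image, and its image equals the connected component of the identity of the closed subgroup H = { (U(a, b, c + k₂t), diag(e^{-2πik₁t}, e^{2πik₁t})) : a, b, c ∈ ℤ, t ∈ ℝ }. -/

import Mathlib

/-- The Heisenberg group over a commutative ring `R`: elements `U(x,y,z)` (upper unitriangular
3×3 matrices `[[1,x,z],[0,1,y],[0,0,1]]`) with the matrix multiplication law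
`U(x,y,z)·U(x',y',z') = U(x+x', y+y', z+z'+x·y')`. -/
@[ext]
structure Heis (R : Type*) [CommRing R] where
  x : R
  y : R
  z : R

namespace Heis

variable {R : Type*} [CommRing R]

instance : Mul (Heis R) := ⟨fun a b => ⟨a.x + b.x, a.y + b.y, a.z + b.z + a.x * b.y⟩⟩
instance : One (Heis R) := ⟨⟨0, 0, 0⟩⟩
instance : Inv (Heis R) := ⟨fun a => ⟨-a.x, -a.y, -a.z + a.x * a.y⟩⟩

@[simp] theorem mul_x (a b : Heis R) : (a * b).x = a.x + b.x := rfl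
@[simp] theorem mul_y (a b : Heis R) : (a * b).y = a.y + b.y := rfl
@[simp] theorem mul_z (a b : Heis R) : (a * b).z = a.z + b.z + a.x * b.y := rfl
@[simp] theorem one_x : (1 : Heis R).x = 0 := rfl
@[simp] theorem one_y : (1 : Heis R).y = 0 := rfl
@[simp] theorem one_z : (1 : Heis R).z = 0 := rfl
@[simp] theorem inv_x (a : Heis R) : (a⁻¹).x = -a.x := rfl
@[simp] theorem inv_y (a : Heis R) : (a⁻¹).y = -a.y := rfl
@[simp] theorem inv_z (a : Heis R) : (a⁻¹).z = -a.z + a.x * a.y := rfl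

instance : Group (Heis R) where
  mul := (· * ·)
  one := 1
  inv := (·⁻¹)
  mul_assoc a b c := by ext <;> simp <;> ring
  one_mul a := by ext <;> simp
  mul_one a := by ext <;> simp
  inv_mul_cancel a := by ext <;> simp <;> ring

@[simp] theorem mk_mul (a b c a' b' c' : R) :
    (⟨a, b, c⟩ * ⟨a', b', c'⟩ : Heis R) = ⟨a + a', b + b', c + c' + a * b'⟩ := rfl

theorem one_def : (1 : Heis R) = ⟨0, 0, 0⟩ := rfl

@[simp] theorem mk_inv (a b c : R) : (⟨a, b, c⟩ : Heis R)⁻¹ = ⟨-a, -b, -c + a * b⟩ := rfl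

end Heis

/-- The standard topology on `H³(ℝ)`, i.e. the topology induced from the space of
3×3 real matrices (equivalently, from the matrix entries `(x, y, z)`). -/
instance : TopologicalSpace (Heis ℝ) :=
  TopologicalSpace.induced (fun h => (h.x, h.y, h.z)) inferInstance

/-- `SU(2)`: the group of 2×2 complex special unitary matrices (unitary matrices of
determinant 1), as a subgroup of the unitary group. -/
def SU2 : Subgroup (Matrix.unitaryGroup (Fin 2) ℂ) where
  carrier := {A | (A : Matrix (Fin 2) (Fin 2) ℂ).det = 1}
  one_mem' := by simp
  mul_mem' {a b} ha hb := by
    simp only [Set.mem_setOf_eq, Matrix.UnitaryGroup.mul_val, Matrix.det_mul] at *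
    rw [ha, hb, mul_one]
  inv_mem' {a} ha := by
    simp only [Set.mem_setOf_eq, Matrix.UnitaryGroup.inv_val] at *
    show (star (a : Matrix (Fin 2) (Fin 2) ℂ)).det = 1
    rw [Matrix.star_eq_conjTranspose, Matrix.det_conjTranspose, ha, star_one]

/-- The element `diag(e^{-iθ}, e^{iθ})` of `SU(2)`. -/
noncomputable def su2diag (θ : ℝ) : SU2 := by
  refine ⟨⟨Matrix.diagonal
      ![Complex.exp (-(θ : ℂ) * Complex.I), Complex.exp ((θ : ℂ) * Complex.I)], ?_⟩, ?_⟩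
  · rw [Matrix.mem_unitaryGroup_iff, Matrix.star_eq_conjTranspose,
      Matrix.diagonal_conjTranspose, Matrix.diagonal_mul_diagonal]
    have hv : (fun i => ![Complex.exp (-(θ : ℂ) * Complex.I), Complex.exp ((θ : ℂ) * Complex.I)] i *
        star ![Complex.exp (-(θ : ℂ) * Complex.I), Complex.exp ((θ : ℂ) * Complex.I)] i) =
        (1 : Fin 2 → ℂ) := by
      funext i
      fin_cases i <;>
        simp [Complex.star_def, ← Complex.exp_conj, ← Complex.exp_add]
    rw [hv]
    exact Matrix.diagonal_one
  · show (Matrix.diagonal _).det = 1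
    rw [Matrix.det_diagonal, Fin.prod_univ_two]
    simp only [Matrix.cons_val_zero, Matrix.cons_val_one, Matrix.head_cons, ← Complex.exp_add]
    ring_nf
    exact Complex.exp_zero

/-- The subset `H = { (U(a,b,c+k₂t), diag(e^{-2πik₁t}, e^{2πik₁t})) : a,b,c ∈ ℤ, t ∈ ℝ }`
of `H³(ℝ) × SU(2)`. -/
noncomputable def Hset (k₁ k₂ : ℕ) : Set (Heis ℝ × SU2) :=
  {p | ∃ (a b c : ℤ) (t : ℝ),
    p = (⟨(a : ℝ), (b : ℝ), (c : ℝ) + (k₂ : ℝ) * t⟩, su2diag (2 * Real.pi * (k₁ : ℝ) * t))}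

/-! `p ↦ p.1.z / k₂` is a continuous left inverse of `φ`, so `φ` is an embedding.

For the identity component, the continuous functions `x`, `y` and the phase
`exp (2πi k₁ z / k₂) · A₀₀` (where `A` is the `SU(2)`-component) take values in the discrete sets
`ℤ`, `ℤ` and the `k₂`-th roots of unity on `H`: at `(U(a, b, c + k₂t), diag(e^{-2πik₁t}, e^{2πik₁t}))`
they are `a`, `b` and `exp (2πi k₁ c / k₂)`. Hence they are constant on the identity component,
equal to `0`, `0`, `1`. That forces `a = b = 0` and `k₂ ∣ k₁ c`, so `k₂ ∣ c` by coprimality and the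
point is `φ (t + c / k₂)`. Conversely `φ(ℝ)` is connected and contains `1`. -/

open Real Complex Topology

theorem Continuous.apply_eq_of_mem_connectedComponent {X Y : Type*} [TopologicalSpace X]
    [TopologicalSpace Y] {f : X → Y} (hf : Continuous f) {T : Set Y} (hT : IsDiscrete T)
    (hfT : ∀ x, f x ∈ T) {x y : X} (hy : y ∈ connectedComponent x) : f y = f x :=
  isPreconnected_connectedComponent.constant_of_mapsTo hT hf.continuousOn (fun z _ => hfT z) hy
    mem_connectedComponent

namespace Heis

theorem continuous_coords : Continuous fun h : Heis ℝ => (h.x, h.y, h.z) :=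
  continuous_induced_dom

@[fun_prop]
theorem continuous_x : Continuous fun h : Heis ℝ => h.x :=
  continuous_fst.comp continuous_coords

@[fun_prop]
theorem continuous_y : Continuous fun h : Heis ℝ => h.y :=
  continuous_fst.comp (continuous_snd.comp continuous_coords)

@[fun_prop]
theorem continuous_z : Continuous fun h : Heis ℝ => h.z :=
  continuous_snd.comp (continuous_snd.comp continuous_coords)

end Heis

theorem su2diag_val (θ : ℝ) :
    (su2diag θ : Matrix (Fin 2) (Fin 2) ℂ) = Matrix.diagonal ![cexp (-θ * I), cexp (θ * I)] :=
  rfl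

theorem su2diag_add (a b : ℝ) : su2diag (a + b) = su2diag a * su2diag b := by
  refine Subtype.ext (Subtype.ext ?_)
  simp only [Subgroup.coe_mul, Matrix.UnitaryGroup.mul_val, su2diag_val,
    Matrix.diagonal_mul_diagonal]
  congr 1
  funext i
  fin_cases i <;> simp [← Complex.exp_add, add_mul, add_comm]

theorem su2diag_add_int_mul_two_pi (θ : ℝ) (n : ℤ) :
    su2diag (θ + n * (2 * π)) = su2diag θ := by
  refine Subtype.ext (Subtype.ext ?_)
  simp only [su2diag_val]
  congr 1
  funext i
  fin_cases i
  · rw [show -((θ + n * (2 * π) : ℝ) : ℂ) * I = -θ * I + (-n : ℤ) * (2 * π * I) by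
      push_cast; ring]
    exact Complex.exp_periodic.int_mul _ _
  · rw [show ((θ + n * (2 * π) : ℝ) : ℂ) * I = θ * I + n * (2 * π * I) by push_cast; ring]
    exact Complex.exp_periodic.int_mul _ _

theorem continuous_su2diag : Continuous su2diag := by
  refine Continuous.subtype_mk (Continuous.subtype_mk (Continuous.matrix_diagonal ?_) _) _
  refine continuous_pi fun i => ?_
  fin_cases i <;>
    simp only [Fin.zero_eta, Fin.mk_one, Matrix.cons_val_zero, Matrix.cons_val_one] <;> fun_prop

@[fun_prop]
theorem continuous_SU2_apply (i j : Fin 2) :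
    Continuous fun A : SU2 => (A : Matrix (Fin 2) (Fin 2) ℂ) i j :=
  (continuous_subtype_val.comp continuous_subtype_val).matrix_elem i j

noncomputable def phi (k₁ k₂ : ℕ) (t : ℝ) : Heis ℝ × SU2 :=
  (⟨0, 0, (k₂ : ℝ) * t⟩, su2diag (2 * π * (k₁ : ℝ) * t))

noncomputable def centralPhase (k₁ k₂ : ℕ) (p : Heis ℝ × SU2) : ℂ :=
  cexp (2 * π * k₁ * p.1.z / k₂ * I) * (p.2 : Matrix (Fin 2) (Fin 2) ℂ) 0 0

section

variable {k₁ k₂ : ℕ}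

theorem phi_add (s t : ℝ) : phi k₁ k₂ (s + t) = phi k₁ k₂ s * phi k₁ k₂ t := by
  refine Prod.ext (Heis.ext ?_ ?_ ?_) ?_
  · simp [phi]
  · simp [phi]
  · simp [phi, mul_add]
  · simp only [phi, Prod.snd_mul, ← su2diag_add, mul_add]

theorem phi_zero : phi k₁ k₂ 0 = 1 := by
  have h := phi_add (k₁ := k₁) (k₂ := k₂) 0 0
  rwa [add_zero, left_eq_mul] at h

theorem continuous_phi : Continuous (phi k₁ k₂) := by
  refine .prodMk ?_ (continuous_su2diag.comp (by fun_prop))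
  rw [continuous_induced_rng]
  show Continuous fun t : ℝ => ((0 : ℝ), (0 : ℝ), (k₂ : ℝ) * t)
  fun_prop

theorem isEmbedding_phi (hk₂ : k₂ ≠ 0) : IsEmbedding (phi k₁ k₂) := by
  refine IsEmbedding.of_comp continuous_phi
    ((Heis.continuous_z.comp continuous_fst).div_const (k₂ : ℝ)) ?_
  convert IsEmbedding.id
  funext t
  simp [phi, hk₂]

theorem phi_mem_Hset (t : ℝ) : phi k₁ k₂ t ∈ Hset k₁ k₂ := by
  refine ⟨0, 0, 0, t, ?_⟩
  simp [phi]

theorem continuous_centralPhase : Continuous (centralPhase k₁ k₂) := by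
  unfold centralPhase
  fun_prop

theorem centralPhase_mk (hk₂ : k₂ ≠ 0) (a b c : ℤ) (t : ℝ) :
    centralPhase k₁ k₂ (⟨a, b, c + k₂ * t⟩, su2diag (2 * π * k₁ * t)) =
      cexp (2 * π * I / k₂) ^ ((k₁ : ℤ) * c) := by
  simp only [centralPhase, su2diag_val, Matrix.diagonal_apply_eq, Matrix.cons_val_zero,
    ← Complex.exp_int_mul, ← Complex.exp_add]
  congr 1
  push_cast
  field_simp
  ring

theorem centralPhase_pow_eq_one_of_mem_Hset (hk₂ : k₂ ≠ 0) {p : Heis ℝ × SU2}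
    (hp : p ∈ Hset k₁ k₂) : centralPhase k₁ k₂ p ^ k₂ = 1 := by
  obtain ⟨a, b, c, t, rfl⟩ := hp
  rw [centralPhase_mk hk₂, ← zpow_natCast, ← zpow_mul, mul_comm _ (k₂ : ℤ), zpow_mul,
    zpow_natCast, (isPrimitiveRoot_exp k₂ hk₂).pow_eq_one, one_zpow]

theorem mem_range_phi_of_mem_Hset (hk₂ : k₂ ≠ 0) (hcop : k₁.Coprime k₂) {p : Heis ℝ × SU2}
    (hp : p ∈ Hset k₁ k₂) (hx : p.1.x = 0) (hy : p.1.y = 0)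
    (hphase : centralPhase k₁ k₂ p = 1) : p ∈ Set.range (phi k₁ k₂) := by
  obtain ⟨a, b, c, t, rfl⟩ := hp
  rw [centralPhase_mk hk₂, (isPrimitiveRoot_exp k₂ hk₂).zpow_eq_one_iff_dvd] at hphase
  obtain ⟨d, rfl⟩ := hcop.symm.isCoprime.dvd_of_dvd_mul_left hphase
  refine ⟨t + d, Prod.ext (Heis.ext hx.symm hy.symm ?_) ?_⟩
  · simp only [phi]
    push_cast
    ring
  · rw [phi, show 2 * π * k₁ * (t + d) = 2 * π * k₁ * t + ((k₁ * d : ℤ) : ℝ) * (2 * π) by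
      push_cast; ring, su2diag_add_int_mul_two_pi]

theorem range_phi_eq_connectedComponent_one (hk₂ : k₂ ≠ 0) (hcop : k₁.Coprime k₂)
    (H : Subgroup (Heis ℝ × SU2)) (hH : (H : Set (Heis ℝ × SU2)) = Hset k₁ k₂) :
    Set.range (phi k₁ k₂) = Subtype.val '' connectedComponent (1 : H) := by
  have hmem (t : ℝ) : phi k₁ k₂ t ∈ H := by
    rw [← SetLike.mem_coe, hH]
    exact phi_mem_Hset t
  have hHset (q : H) : (q : Heis ℝ × SU2) ∈ Hset k₁ k₂ := hH ▸ q.2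
  apply subset_antisymm
  · have hrange : Set.range (fun t => (⟨phi k₁ k₂ t, hmem t⟩ : H)) ⊆ connectedComponent 1 :=
      (isPreconnected_range (continuous_phi.subtype_mk hmem)).subset_connectedComponent
        ⟨0, Subtype.ext phi_zero⟩
    rintro _ ⟨t, rfl⟩
    exact ⟨_, hrange ⟨t, rfl⟩, rfl⟩
  · rintro _ ⟨q, hq, rfl⟩
    have hconst {Y : Type} [TopologicalSpace Y] {f : Heis ℝ × SU2 → Y} (hf : Continuous f)
        {T : Set Y} (hT : IsDiscrete T) (hfT : ∀ p ∈ Hset k₁ k₂, f p ∈ T) : f q = f 1 :=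
      (hf.comp continuous_subtype_val).apply_eq_of_mem_connectedComponent hT
        (fun q' => hfT _ (hHset q')) hq
    have hint : IsDiscrete (Set.range ((↑) : ℤ → ℝ)) :=
      Int.isClosedEmbedding_coe_real.isInducing.isDiscrete_range
    have hx : (q : Heis ℝ × SU2).1.x = 0 :=
      hconst (f := fun p => p.1.x) (by fun_prop) hint
        (by rintro _ ⟨a, b, c, t, rfl⟩; exact ⟨a, rfl⟩)
    have hy : (q : Heis ℝ × SU2).1.y = 0 :=
      hconst (f := fun p => p.1.y) (by fun_prop) hint
        (by rintro _ ⟨a, b, c, t, rfl⟩; exact ⟨b, rfl⟩)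
    have hphase : centralPhase k₁ k₂ q = 1 := by
      refine (hconst continuous_centralPhase (Finset.finite_toSet _).isDiscrete fun p hp =>
        (Polynomial.mem_nthRootsFinset (Nat.pos_of_ne_zero hk₂) 1).2
          (centralPhase_pow_eq_one_of_mem_Hset hk₂ hp)).trans ?_
      simp [centralPhase]
    exact mem_range_phi_of_mem_Hset hk₂ hcop (hHset q) hx hy hphase

end

open Topology in
theorem phi_embedding_identity_component_general (k₁ k₂ : ℕ) (hk₂ : 0 < k₂)
    (hcop : Nat.Coprime k₁ k₂)
    (φ : ℝ → Heis ℝ × SU2)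
    (hφ : ∀ t : ℝ, φ t = (⟨0, 0, (k₂ : ℝ) * t⟩, su2diag (2 * Real.pi * (k₁ : ℝ) * t))) :
    (∀ s t : ℝ, φ (s + t) = φ s * φ t) ∧
    Function.Injective φ ∧
    Continuous φ ∧
    IsEmbedding φ ∧
    ∀ H : Subgroup (Heis ℝ × SU2), (H : Set (Heis ℝ × SU2)) = Hset k₁ k₂ →
      IsClosed (H : Set (Heis ℝ × SU2)) →
      Set.range φ = Subtype.val '' connectedComponent (1 : H) := by
  obtain rfl : φ = phi k₁ k₂ := funext hφ
  have hk₂ : k₂ ≠ 0 := hk₂.ne'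
  exact ⟨phi_add, (isEmbedding_phi hk₂).injective, continuous_phi, isEmbedding_phi hk₂,
    fun H hH _ => range_phi_eq_connectedComponent_one hk₂ hcop H hH⟩

open Topology in
/-- Let `k₁, k₂` be relatively prime positive integers. The map `φ : ℝ → H³(ℝ) × SU(2)`,
`φ(t) = (U(0,0,k₂t), diag(e^{-2πik₁t}, e^{2πik₁t}))`, is an injective continuous group
homomorphism which is a homeomorphism onto its image, and its image is the identity
component of the closed subgroup `H`. -/
theorem phi_embedding_identity_component (k₁ k₂ : ℕ) (hk₁ : 0 < k₁) (hk₂ : 0 < k₂)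
    (hcop : Nat.Coprime k₁ k₂)
    (φ : ℝ → Heis ℝ × SU2)
    (hφ : ∀ t : ℝ, φ t = (⟨0, 0, (k₂ : ℝ) * t⟩, su2diag (2 * Real.pi * (k₁ : ℝ) * t))) :
    (∀ s t : ℝ, φ (s + t) = φ s * φ t) ∧
    Function.Injective φ ∧
    Continuous φ ∧
    IsEmbedding φ ∧
    ∀ H : Subgroup (Heis ℝ × SU2), (H : Set (Heis ℝ × SU2)) = Hset k₁ k₂ →
      IsClosed (H : Set (Heis ℝ × SU2)) →
      Set.range φ = Subtype.val '' connectedComponent (1 : H) :=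
  phi_embedding_identity_component_general k₁ k₂ hk₂ hcop φ hφ
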